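/- arXiv:2005.06441 — 3 statements merged into one kernel-verified Lean document; each statement's English description precedes it below -/
import Mathlib

section
/- If A is an n×n real symmetric PSD matrix with all entries bounded in absolute value by 1, then for any 1 ≤ k ≤ n, ∑_{i>k} σ_i(A)² ≤ n²/k. -/
open Matrix BigOperators Finset

/-!
The eigenvalues of a PSD matrix are nonnegative and sum to `tr A ≤ n`. A nonincreasing
nonnegative sequence with sum `S` has `σ i ≤ S / k` for `i ≥ k`, since the first `k` terms are
each at least `σ i`; hence `∑_{i ≥ k} σ i ^ 2 ≤ (S / k) ∑ σ i = S ^ 2 / k ≤ n ^ 2 / k`.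
-/

lemma Fin.natCast_mul_le_sum_of_antitone {n : ℕ} {σ : Fin n → ℝ} (hσ : Antitone σ)
    (h0 : ∀ i, 0 ≤ σ i) {k : ℕ} {i : Fin n} (hki : k ≤ (i : ℕ)) :
    (k : ℝ) * σ i ≤ ∑ j, σ j :=
  calc (k : ℝ) * σ i ≤ (i : ℕ) * σ i := by gcongr; exact h0 i
    _ = ∑ _j ∈ Iio i, σ i := by rw [Finset.sum_const, Fin.card_Iio, nsmul_eq_mul]
    _ ≤ ∑ j ∈ Iio i, σ j := sum_le_sum fun j hj => hσ (mem_Iio.mp hj).le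
    _ ≤ ∑ j, σ j := sum_le_univ_sum_of_nonneg h0

lemma Fin.sum_tail_sq_le_of_antitone {n : ℕ} {σ : Fin n → ℝ} (hσ : Antitone σ)
    (h0 : ∀ i, 0 ≤ σ i) {k : ℕ} (hk : 0 < k) :
    ∑ i : Fin n, (if k ≤ (i : ℕ) then σ i ^ 2 else 0) ≤ (∑ i, σ i) ^ 2 / k := by
  have hk' : (0 : ℝ) < k := by exact_mod_cast hk
  calc ∑ i : Fin n, (if k ≤ (i : ℕ) then σ i ^ 2 else 0)
      ≤ ∑ i, (∑ j, σ j) / k * σ i := by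
        refine sum_le_sum fun i _ => ?_
        split_ifs with hki
        · rw [sq]
          refine mul_le_mul_of_nonneg_right ?_ (h0 i)
          rw [le_div_iff₀ hk', mul_comm]
          exact Fin.natCast_mul_le_sum_of_antitone hσ h0 hki
        · exact mul_nonneg (div_nonneg (sum_nonneg fun j _ => h0 j) hk'.le) (h0 i)
    _ = (∑ i, σ i) ^ 2 / k := by rw [← mul_sum]; ring

lemma Matrix.trace_le_card_of_diag_le_one {n : Type*} [Fintype n] {A : Matrix n n ℝ}
    (hdiag : ∀ i, A i i ≤ 1) : A.trace ≤ Fintype.card n :=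
  calc A.trace ≤ ∑ _i : n, (1 : ℝ) := sum_le_sum fun i _ => hdiag i
    _ = Fintype.card n := by simp

theorem stmt_1_general {n : ℕ} (A : Matrix (Fin n) (Fin n) ℝ)
    (hA : A.PosSemidef) (hbound : ∀ i j, |A i j| ≤ 1)
    (σ : Fin n → ℝ) (e : Equiv.Perm (Fin n))
    (hσe : ∀ i, σ i = hA.1.eigenvalues (e i))
    (hmono : ∀ i j : Fin n, i ≤ j → σ j ≤ σ i)
    (k : ℕ) (hk1 : 1 ≤ k) :
    ∑ i : Fin n, (if k ≤ (i : ℕ) then σ i ^ 2 else 0) ≤ (n : ℝ) ^ 2 / k := by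
  have hσ0 : ∀ i, 0 ≤ σ i := fun i => (hσe i) ▸ hA.eigenvalues_nonneg (e i)
  have hsum_eq_trace : ∑ i, σ i = A.trace := by
    simp only [hσe, Equiv.sum_comp e, hA.1.trace_eq_sum_eigenvalues, RCLike.ofReal_real_eq_id,
      id_eq]
  have hsum_le : ∑ i, σ i ≤ n := by
    simpa [hsum_eq_trace] using
      Matrix.trace_le_card_of_diag_le_one fun i => (le_abs_self _).trans (hbound i i)
  calc _ ≤ (∑ i, σ i) ^ 2 / k := Fin.sum_tail_sq_le_of_antitone hmono hσ0 hk1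
    _ ≤ (n : ℝ) ^ 2 / k := by
      gcongr
      exact sum_nonneg fun i _ => hσ0 i

/-- If `A` is an `n × n` real symmetric PSD matrix with all entries bounded by `1` in absolute
value, then for any `1 ≤ k ≤ n`, the sum of the squares of the smallest `n - k` singular values
of `A` (its eigenvalues, listed here in non-increasing order `σ`) is at most `n² / k`. -/
theorem stmt_1 {n : ℕ} (hn : 0 < n) (A : Matrix (Fin n) (Fin n) ℝ)
    (hA : A.PosSemidef) (hbound : ∀ i j, |A i j| ≤ 1)
    (σ : Fin n → ℝ) (e : Equiv.Perm (Fin n))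
    (hσe : ∀ i, σ i = hA.1.eigenvalues (e i))
    (hmono : ∀ i j : Fin n, i ≤ j → σ j ≤ σ i)
    (k : ℕ) (hk1 : 1 ≤ k) (hkn : k ≤ n) :
    ∑ i : Fin n, (if k ≤ (i : ℕ) then σ i ^ 2 else 0) ≤ (n : ℝ) ^ 2 / k :=
  stmt_1_general A hA hbound σ e hσe hmono k hk1
end

section
/- Let A be an n×n matrix with ‖A‖_∞ ≤ 1, let y ∈ ℝⁿ with ‖y‖_2 ≤ 1 and yᵀAy < −εn for some ε ∈ (0,1). Let δ_1,...,δ_n be independent Bernoulli(k/n) random variables with k ≥ 8/ε. Then E[∑_{i,j} y_i A_{ij} y_j δ_i δ_j] ≤ −εk²/(4n). -/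
/-!
Writing `p = k/n`, we have `E[δ_i δ_j] = p²` for `i ≠ j` by independence and `E[δ_i²] = E[δ_i] = p`,
so the expectation equals `p² yᵀAy + (p - p²) ∑ᵢ y_i² A_ii`. The first term is below `-p² ε n = -ε k²/n`
and the diagonal term is at most `p = k/n`, which `εk ≥ 8` makes negligible.
-/

open Matrix BigOperators Finset MeasureTheory ProbabilityTheory

section ZeroOneValued

variable {α : Type*} {f : α → ℝ}

lemma eq_indicator_of_zero_or_one (h01 : ∀ a, f a = 0 ∨ f a = 1) :
    f = {a | f a = 1}.indicator 1 := by
  funext a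
  rcases h01 a with h | h <;> simp [h]

lemma mul_self_eq_of_zero_or_one (h01 : ∀ a, f a = 0 ∨ f a = 1) : (fun a ↦ f a * f a) = f := by
  funext a
  rcases h01 a with h | h <;> simp [h]

lemma integral_eq_of_zero_or_one [MeasurableSpace α] {μ : Measure α} {p : ℝ} (hf : Measurable f)
    (h01 : ∀ a, f a = 0 ∨ f a = 1) (hp : μ {a | f a = 1} = ENNReal.ofReal p) (hp0 : 0 ≤ p) :
    ∫ a, f a ∂μ = p := by
  have hs : MeasurableSet {a | f a = 1} := hf (measurableSet_singleton 1)
  rw [eq_indicator_of_zero_or_one h01, Pi.one_def, integral_indicator_const _ hs, measureReal_def,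
    hp, ENNReal.toReal_ofReal hp0, smul_eq_mul, mul_one]

end ZeroOneValued

section IndependentIndicators

variable {ι Ω : Type*} [MeasurableSpace Ω] {μ : Measure Ω}
  {δ : ι → Ω → ℝ} {p : ℝ}

lemma integral_mul_eq_ite_of_iIndepFun [DecidableEq ι] (hmeas : ∀ i, Measurable (δ i))
    (h01 : ∀ i ω, δ i ω = 0 ∨ δ i ω = 1) (hp : ∀ i, μ {ω | δ i ω = 1} = ENNReal.ofReal p)
    (hp0 : 0 ≤ p) (hindep : iIndepFun δ μ) (i j : ι) :
    ∫ ω, δ i ω * δ j ω ∂μ = if i = j then p else p ^ 2 := by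
  have hE : ∀ i, ∫ ω, δ i ω ∂μ = p := fun i ↦
    integral_eq_of_zero_or_one (hmeas i) (h01 i) (hp i) hp0
  split_ifs with hij
  · subst hij
    rw [mul_self_eq_of_zero_or_one (h01 i), hE i]
  · rw [(hindep.indepFun hij).integral_fun_mul_eq_mul_integral
      (hmeas i).aestronglyMeasurable (hmeas j).aestronglyMeasurable, hE i, hE j, sq]

lemma integrable_mul_of_zero_or_one [IsFiniteMeasure μ] (hmeas : ∀ i, Measurable (δ i))
    (h01 : ∀ i ω, δ i ω = 0 ∨ δ i ω = 1) (c : ℝ) (i j : ι) :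
    Integrable (fun ω ↦ c * δ i ω * δ j ω) μ := by
  refine Integrable.of_bound (by fun_prop) |c| (ae_of_all _ fun ω ↦ ?_)
  rcases h01 i ω with hi | hi <;> rcases h01 j ω with hj | hj <;> simp [hi, hj]

lemma integral_sum_sum_mul_of_iIndepFun [IsFiniteMeasure μ] [Fintype ι]
    (hmeas : ∀ i, Measurable (δ i)) (h01 : ∀ i ω, δ i ω = 0 ∨ δ i ω = 1)
    (hp : ∀ i, μ {ω | δ i ω = 1} = ENNReal.ofReal p) (hp0 : 0 ≤ p) (hindep : iIndepFun δ μ)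
    (c : ι → ι → ℝ) :
    ∫ ω, (∑ i, ∑ j, c i j * δ i ω * δ j ω) ∂μ
      = p ^ 2 * ∑ i, ∑ j, c i j + (p - p ^ 2) * ∑ i, c i i := by
  classical
  have hint := integrable_mul_of_zero_or_one (μ := μ) hmeas h01
  have hterm : ∀ i j, ∫ ω, c i j * δ i ω * δ j ω ∂μ
      = p ^ 2 * c i j + if i = j then (p - p ^ 2) * c i i else 0 := by
    intro i j
    simp_rw [mul_assoc, integral_const_mul,
      integral_mul_eq_ite_of_iIndepFun hmeas h01 hp hp0 hindep i j]
    split_ifs with hij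
    · subst hij; ring
    · ring
  rw [integral_finsetSum _ fun i _ ↦ integrable_finsetSum _ fun j _ ↦ hint _ i j]
  simp_rw [integral_finsetSum _ fun j _ ↦ hint _ _ j, hterm, sum_add_distrib, sum_ite_eq,
    mem_univ, if_true, mul_sum]

end IndependentIndicators

lemma dotProduct_mulVec_eq_sum_sum {ι : Type*} [Fintype ι] (A : Matrix ι ι ℝ) (y : ι → ℝ) :
    y ⬝ᵥ A *ᵥ y = ∑ i, ∑ j, y i * A i j * y j := by
  simp only [dotProduct, mulVec, mul_sum]
  exact sum_congr rfl fun i _ ↦ sum_congr rfl fun j _ ↦ by ring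

lemma sum_diag_le_sum_sq {ι : Type*} [Fintype ι] {A : Matrix ι ι ℝ}
    (hbound : ∀ i, |A i i| ≤ 1) (y : ι → ℝ) :
    ∑ i, y i * A i i * y i ≤ ∑ i, y i ^ 2 := by
  refine sum_le_sum fun i _ ↦ ?_
  have h := mul_le_mul_of_nonneg_right (le_of_abs_le (hbound i)) (sq_nonneg (y i))
  linarith [show y i * A i i * y i = A i i * y i ^ 2 by ring]

theorem stmt_5_general {n : ℕ} (hn : 0 < n) (A : Matrix (Fin n) (Fin n) ℝ)
    (hbound : ∀ i j, |A i j| ≤ 1) (y : Fin n → ℝ) (hy : ∑ i, y i ^ 2 ≤ 1)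
    (ε : ℝ) (hε : 0 < ε)
    (hquad : y ⬝ᵥ A.mulVec y < -(ε * n))
    (k : ℕ) (hk : (8 : ℝ) / ε ≤ k) (hkn : k ≤ n)
    {Ω : Type} [MeasurableSpace Ω] (μ : Measure Ω) [IsProbabilityMeasure μ]
    (δ : Fin n → Ω → ℝ) (hmeas : ∀ i, Measurable (δ i))
    (h01 : ∀ i ω, δ i ω = 0 ∨ δ i ω = 1)
    (hp : ∀ i, μ {ω | δ i ω = 1} = ENNReal.ofReal ((k : ℝ) / n))
    (hindep : iIndepFun δ μ) :
    (∫ ω, (∑ i, ∑ j, y i * A i j * y j * δ i ω * δ j ω) ∂μ)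
      ≤ -(ε * k ^ 2 / (4 * n)) := by
  have hn' : (0 : ℝ) < n := by exact_mod_cast hn
  set p : ℝ := k / n with hp_def
  have hp0 : 0 ≤ p := by positivity
  have hp1 : p ≤ 1 := (div_le_one hn').mpr (by exact_mod_cast hkn)
  rw [integral_sum_sum_mul_of_iIndepFun hmeas h01 hp hp0 hindep, ← dotProduct_mulVec_eq_sum_sum]
  have hdiag : ∑ i, y i * A i i * y i ≤ 1 := (sum_diag_le_sum_sq (fun i ↦ hbound i i) y).trans hy
  have hεk : 8 ≤ ε * k := by rwa [div_le_iff₀ hε, mul_comm] at hk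
  have hpp : 0 ≤ p - p ^ 2 := by nlinarith
  calc p ^ 2 * (y ⬝ᵥ A *ᵥ y) + (p - p ^ 2) * ∑ i, y i * A i i * y i
      ≤ p ^ 2 * -(ε * n) + (p - p ^ 2) * 1 := by gcongr
    _ ≤ p ^ 2 * -(ε * n) + p := by nlinarith
    _ = (k - ε * k ^ 2) / n := by rw [hp_def]; field_simp; ring
    _ ≤ -(ε * k ^ 2 / (4 * n)) := by rw [div_le_iff₀ hn']; field_simp; nlinarith

/-- Let `A` be an `n × n` matrix with `‖A‖_∞ ≤ 1`, `y ∈ ℝⁿ` with `‖y‖₂ ≤ 1` and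
`yᵀ A y < -ε n` for some `ε ∈ (0,1)`. Let `δ₁, …, δₙ` be independent Bernoulli(`k/n`)
indicator random variables with `k ≥ 8/ε`. Then
`E[∑_{i,j} y_i A_{ij} y_j δ_i δ_j] ≤ -ε k² / (4 n)`. -/
theorem stmt_5 {n : ℕ} (hn : 0 < n) (A : Matrix (Fin n) (Fin n) ℝ)
    (hbound : ∀ i j, |A i j| ≤ 1) (y : Fin n → ℝ) (hy : ∑ i, y i ^ 2 ≤ 1)
    (ε : ℝ) (hε : 0 < ε) (hε1 : ε < 1)
    (hquad : y ⬝ᵥ A.mulVec y < -(ε * n))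
    (k : ℕ) (hk : (8 : ℝ) / ε ≤ k) (hkn : k ≤ n)
    {Ω : Type} [MeasurableSpace Ω] (μ : Measure Ω) [IsProbabilityMeasure μ]
    (δ : Fin n → Ω → ℝ) (hmeas : ∀ i, Measurable (δ i))
    (h01 : ∀ i ω, δ i ω = 0 ∨ δ i ω = 1)
    (hp : ∀ i, μ {ω | δ i ω = 1} = ENNReal.ofReal ((k : ℝ) / n))
    (hindep : iIndepFun δ μ) :
    (∫ ω, (∑ i, ∑ j, y i * A i j * y j * δ i ω * δ j ω) ∂μ)
      ≤ -(ε * k ^ 2 / (4 * n)) :=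
  stmt_5_general hn A hbound y hy ε hε hquad k hk hkn μ δ hmeas h01 hp hindep
end

section
/- Let D be a real symmetric n×n matrix with ‖D‖_∞ ≤ 1 whose negative eigenvalues satisfy ∑_{i: λ_i < 0} λ_i² ≥ εn², and suppose additionally that λ_min(D) > −n/(2k) for some integer k ≥ 2/ε. Then the tail of the squared singular values satisfies ∑_{i>k} σ_i(D)² > εn²/2. -/
/-!
A negative eigenvalue above `-n/(2k)` contributes less than `(n/(2k))²` to `∑_{λᵢ<0} λᵢ²`, so
any `k` of the singular values absorb at most `k (n/(2k))² = n²/(4k) ≤ εn²/8` of it. The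
rest, at least `7εn²/8`, is carried by the tail `∑_{i>k} σᵢ²`.
-/

open Finset

lemma ite_neg_sq_le_sq (x : ℝ) : (if x < 0 then x ^ 2 else 0) ≤ x ^ 2 := by
  split_ifs
  · rfl
  · positivity

lemma ite_neg_sq_le_sq_of_neg_le {x c : ℝ} (h : -c ≤ x) : (if x < 0 then x ^ 2 else 0) ≤ c ^ 2 := by
  split_ifs with hx
  · exact sq_le_sq' h (by linarith)
  · positivity

lemma sum_ite_neg_sq_le_card_mul_add {ι : Type*} [Fintype ι] [DecidableEq ι] (f : ι → ℝ)
    {c : ℝ} (hf : ∀ i, -c ≤ f i) (s : Finset ι) :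
    ∑ i, (if f i < 0 then f i ^ 2 else 0) ≤ #s * c ^ 2 + ∑ i ∈ sᶜ, f i ^ 2 := by
  rw [← sum_add_sum_compl s, ← nsmul_eq_mul]
  gcongr with i
  · exact sum_le_card_nsmul _ _ _ fun i _ ↦ ite_neg_sq_le_sq_of_neg_le (hf i)
  · exact ite_neg_sq_le_sq (f i)

lemma mul_div_two_mul_sq_le {ε n k : ℝ} (hε : 0 < ε) (hk : 2 / ε ≤ k) :
    k * (n / (2 * k)) ^ 2 ≤ ε * n ^ 2 / 8 := by
  have hk0 : 0 < k := (div_pos two_pos hε).trans_le hk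
  have hεk : 2 ≤ ε * k := by rwa [div_le_iff₀ hε, mul_comm] at hk
  rw [show k * (n / (2 * k)) ^ 2 = n ^ 2 / (4 * k) by field_simp; ring,
    div_le_div_iff₀ (by positivity) (by norm_num)]
  nlinarith [sq_nonneg n]

theorem stmt_17_general {n : ℕ} (hn : 0 < n) (D : Matrix (Fin n) (Fin n) ℝ)
    (hD : D.IsHermitian)
    (ε : ℝ) (hε : 0 < ε)
    (k : ℕ) (hk : 2 / ε ≤ k)
    (hfar : ε * n ^ 2 ≤ ∑ i, if hD.eigenvalues i < 0 then hD.eigenvalues i ^ 2 else 0)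
    (hmin : ∀ i, -((n : ℝ) / (2 * k)) < hD.eigenvalues i)
    (σ : Fin n → ℝ) (e : Equiv.Perm (Fin n))
    (hσ : ∀ i, σ i = |hD.eigenvalues (e i)|) :
    ε * n ^ 2 / 2 < ∑ i : Fin n, (if k ≤ (i : ℕ) then σ i ^ 2 else 0) := by
  set head : Finset (Fin n) := {i | (i : ℕ) < k}
  have hsplit := sum_ite_neg_sq_le_card_mul_add (hD.eigenvalues ∘ e) (fun i ↦ (hmin (e i)).le) head
  simp only [Function.comp_apply] at hsplit
  rw [← Equiv.sum_comp e] at hfar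
  have htail : ∑ i ∈ headᶜ, hD.eigenvalues (e i) ^ 2
      = ∑ i : Fin n, (if k ≤ (i : ℕ) then σ i ^ 2 else 0) := by
    simp only [head, compl_filter, not_lt, sum_filter, hσ, sq_abs]
  have hhead : (#head : ℝ) * ((n : ℝ) / (2 * k)) ^ 2 ≤ ε * n ^ 2 / 8 := by
    calc (#head : ℝ) * ((n : ℝ) / (2 * k)) ^ 2 ≤ k * ((n : ℝ) / (2 * k)) ^ 2 := by
          gcongr; exact_mod_cast Fin.card_filter_val_lt.le.trans (min_le_right _ _)
      _ ≤ ε * n ^ 2 / 8 := mul_div_two_mul_sq_le hε hk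
  have : 0 < ε * n ^ 2 := by positivity
  linarith

/-- Let `D` be a real symmetric `n × n` matrix with `‖D‖_∞ ≤ 1` whose negative eigenvalues
satisfy `∑_{i : λᵢ < 0} λᵢ² ≥ ε n²`, and suppose `λ_min(D) > -n/(2k)` for an integer
`k ≥ 2/ε` (with `ε ∈ (0,1]`). Then the tail of the squared singular values (the absolute
values of the eigenvalues, sorted in non-increasing order `σ`) satisfies
`∑_{i > k} σᵢ(D)² > ε n² / 2`. -/
theorem stmt_17 {n : ℕ} (hn : 0 < n) (D : Matrix (Fin n) (Fin n) ℝ)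
    (hD : D.IsHermitian) (hbound : ∀ i j, |D i j| ≤ 1)
    (ε : ℝ) (hε : 0 < ε) (hε1 : ε ≤ 1)
    (k : ℕ) (hk : 2 / ε ≤ k)
    (hfar : ε * n ^ 2 ≤ ∑ i, if hD.eigenvalues i < 0 then hD.eigenvalues i ^ 2 else 0)
    (hmin : ∀ i, -((n : ℝ) / (2 * k)) < hD.eigenvalues i)
    (σ : Fin n → ℝ) (e : Equiv.Perm (Fin n))
    (hσ : ∀ i, σ i = |hD.eigenvalues (e i)|)
    (hmono : ∀ i j : Fin n, i ≤ j → σ j ≤ σ i) :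
    ε * n ^ 2 / 2 < ∑ i : Fin n, (if k ≤ (i : ℕ) then σ i ^ 2 else 0) :=
  stmt_17_general hn D hD ε hε k hk hfar hmin σ e hσ
end
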